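/- arXiv:1905.07450 — 3 statements merged into one kernel-verified Lean document; each statement's English description precedes it below -/
import Mathlib

section
/- Fix d ≥ 2. For every real α with 0 ≤ α < (d-1)/d and every constant c > 0, there exists a continuous function f : [0,1]^d → ℝ with ∫_{[0,1]^d} f(x) dx = 0 and f not identically zero such that W_1(μ_+, μ_-) · H^{d-1}({x ∈ (0,1)^d : f(x) = 0}) < c · (‖f‖_{L^1} / ‖f‖_{L^∞})^α · ‖f‖_{L^1}. In other words, an uncertainty principle of this form with exponent α can only hold for α ≥ (d-1)/d. -/
open MeasureTheory Set ENNReal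

noncomputable section

/-- The closed unit cube `[0,1]^d` in Euclidean space. -/
def unitCube (d : ℕ) : Set (EuclideanSpace ℝ (Fin d)) :=
  {x | ∀ i, x i ∈ Icc (0 : ℝ) 1}

/-- The open unit cube `(0,1)^d` in Euclidean space. -/
def openUnitCube (d : ℕ) : Set (EuclideanSpace ℝ (Fin d)) :=
  {x | ∀ i, x i ∈ Ioo (0 : ℝ) 1}

/-- Couplings of two measures: measures on the product with the given marginals. -/
def couplings {X : Type*} [MeasurableSpace X] (μ ν : Measure X) : Set (Measure (X × X)) :=
  {γ | γ.map Prod.fst = μ ∧ γ.map Prod.snd = ν}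

/-- The 1-Wasserstein (Earth Mover's) distance, as an extended nonnegative real. -/
def W1 {X : Type*} [MeasurableSpace X] [PseudoEMetricSpace X] (μ ν : Measure X) : ℝ≥0∞ :=
  ⨅ γ ∈ couplings μ ν, ∫⁻ z, edist z.1 z.2 ∂γ

/-- The measure on `[0,1]^d` with density `max (f, 0)` w.r.t. Lebesgue measure. -/
def muPlus (d : ℕ) (f : EuclideanSpace ℝ (Fin d) → ℝ) : Measure (EuclideanSpace ℝ (Fin d)) :=
  (volume.restrict (unitCube d)).withDensity fun x => ENNReal.ofReal (f x)

/-- closed box -/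
def box (d : ℕ) (a b : ℝ) : Set (EuclideanSpace ℝ (Fin d)) :=
  {x | ∀ i, x i ∈ Icc a b}

lemma box_eq_preimage (d : ℕ) (a b : ℝ) :
    box d a b = (MeasurableEquiv.toLp 2 (Fin d → ℝ)).symm ⁻¹' (univ.pi fun _ => Icc a b) := by
  ext x
  simp only [box, MeasurableEquiv.toLp, Set.mem_preimage, Set.mem_pi,
    Set.mem_univ, forall_true_left, mem_setOf_eq, mem_Icc, MeasurableEquiv.coe_mk]
  rfl

lemma volume_box (d : ℕ) (a b : ℝ) :
    volume (box d a b) = ENNReal.ofReal (b - a) ^ d := by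
  rw [box_eq_preimage,
    (EuclideanSpace.volume_preserving_symm_measurableEquiv_toLp (Fin d)).measure_preimage
      ((MeasurableSet.univ_pi fun _ => measurableSet_Icc).nullMeasurableSet)]
  rw [volume_pi_pi]
  simp [Real.volume_Icc]

lemma continuous_eval (d : ℕ) (i : Fin d) :
    Continuous (fun x : EuclideanSpace ℝ (Fin d) => x i) :=
  (continuous_apply i).comp (PiLp.continuous_ofLp (p := 2) (β := fun _ : Fin d => ℝ))

lemma isClosed_box (d : ℕ) (a b : ℝ) : IsClosed (box d a b) := by
  have : box d a b = ⋂ i, (fun x : EuclideanSpace ℝ (Fin d) => x i) ⁻¹' Icc a b := by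
    ext x; simp [box]
  rw [this]
  exact isClosed_iInter fun i => isClosed_Icc.preimage (continuous_eval d i)

lemma isCompact_box (d : ℕ) (a b : ℝ) : IsCompact (box d a b) := by
  refine Metric.isCompact_of_isClosed_isBounded (isClosed_box d a b) ?_
  rw [isBounded_iff_forall_norm_le]
  refine ⟨Real.sqrt (d * (|a| + |b|) ^ 2), fun x hx => ?_⟩
  rw [EuclideanSpace.norm_eq]
  apply Real.sqrt_le_sqrt
  have : ∀ i, ‖x i‖ ^ 2 ≤ (|a| + |b|) ^ 2 := by
    intro i
    have h := hx i
    have h1 : |x i| ≤ |a| + |b| := by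
      rw [abs_le]
      constructor
      · nlinarith [h.1, h.2, abs_nonneg a, abs_nonneg b, neg_abs_le a, le_abs_self b]
      · nlinarith [h.1, h.2, abs_nonneg a, abs_nonneg b, neg_abs_le a, le_abs_self b]
    calc ‖x i‖ ^ 2 = |x i| ^ 2 := by rw [Real.norm_eq_abs]
    _ ≤ (|a| + |b|) ^ 2 := by nlinarith [abs_nonneg (x i)]
  calc ∑ i, ‖x i‖ ^ 2 ≤ ∑ _i : Fin d, (|a| + |b|) ^ 2 := Finset.sum_le_sum fun i _ => this i
  _ = d * (|a| + |b|) ^ 2 := by simp [Finset.sum_const]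

lemma unitCube_eq_box (d : ℕ) : unitCube d = box d 0 1 := rfl

lemma volume_unitCube (d : ℕ) : volume (unitCube d) = 1 := by
  rw [unitCube_eq_box, volume_box]; simp

lemma measurableSet_unitCube (d : ℕ) : MeasurableSet (unitCube d) :=
  (isClosed_box d 0 1).measurableSet

lemma isCompact_unitCube (d : ℕ) : IsCompact (unitCube d) := isCompact_box d 0 1


/-- sup-norm distance from the center of the cube -/
def supDist (d : ℕ) (x : EuclideanSpace ℝ (Fin d)) : ℝ :=
  ‖((WithLp.equiv 2 (Fin d → ℝ)) x) - (fun _ => (1:ℝ)/2)‖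

lemma continuous_supDist (d : ℕ) : Continuous (supDist d) := by
  apply Continuous.norm
  exact ((PiLp.continuous_ofLp (p := 2) (β := fun _ : Fin d => ℝ))).sub continuous_const

lemma supDist_nonneg (d : ℕ) (x : EuclideanSpace ℝ (Fin d)) : 0 ≤ supDist d x :=
  norm_nonneg _

lemma supDist_le (d : ℕ) (x : EuclideanSpace ℝ (Fin d)) {b : ℝ} (hb : 0 ≤ b)
    (h : ∀ i, |x i - 1/2| ≤ b) : supDist d x ≤ b := by
  rw [supDist, pi_norm_le_iff_of_nonneg hb]
  intro i
  simpa [Real.norm_eq_abs] using h i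

lemma abs_le_supDist (d : ℕ) (x : EuclideanSpace ℝ (Fin d)) (i : Fin d) :
    |x i - 1/2| ≤ supDist d x := by
  rw [supDist]
  have := norm_le_pi_norm ((WithLp.equiv 2 (Fin d → ℝ)) x - (fun _ => (1:ℝ)/2)) i
  simpa [Real.norm_eq_abs] using this

lemma exists_abs_eq_of_supDist_eq (d : ℕ) (x : EuclideanSpace ℝ (Fin d)) {ρ : ℝ}
    (hρ : 0 < ρ) (h : supDist d x = ρ) : ∃ i, |x i - 1/2| = ρ := by
  by_contra hcon
  push_neg at hcon
  have hall : ∀ i, |x i - 1/2| < ρ := fun i =>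
    lt_of_le_of_ne (h ▸ abs_le_supDist d x i) (hcon i)
  have : supDist d x < ρ := by
    rw [supDist, pi_norm_lt_iff hρ]
    intro i
    simpa [Real.norm_eq_abs] using hall i
  linarith
  


def faceMap (m : ℕ) (i : Fin (m+1)) (a : ℝ) : (Fin m → ℝ) → EuclideanSpace ℝ (Fin (m+1)) :=
  fun y => (WithLp.equiv 2 (Fin (m+1) → ℝ)).symm (i.insertNth a y)

lemma faceMap_apply (m : ℕ) (i : Fin (m+1)) (a : ℝ) (y : Fin m → ℝ) (k : Fin (m+1)) :
    (faceMap m i a y) k = Fin.insertNth (α := fun _ => ℝ) i a y k := rfl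

lemma lipschitz_faceMap (m : ℕ) (i : Fin (m+1)) (a : ℝ) :
    LipschitzWith (Real.toNNReal (Real.sqrt m)) (faceMap m i a) := by
  apply LipschitzWith.of_dist_le_mul
  intro y y'
  rw [EuclideanSpace.dist_eq]
  have hsum : ∑ k : Fin (m+1), dist (faceMap m i a y k) (faceMap m i a y' k) ^ 2
      = ∑ j : Fin m, dist (y j) (y' j) ^ 2 := by
    rw [Fin.sum_univ_succAbove (fun k => dist (faceMap m i a y k) (faceMap m i a y' k) ^ 2) i]
    simp only [faceMap_apply, Fin.insertNth_apply_same, Fin.insertNth_apply_succAbove]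
    simp
  rw [hsum]
  have hb : ∀ j : Fin m, dist (y j) (y' j) ^ 2 ≤ dist y y' ^ 2 := by
    intro j
    have h1 := dist_le_pi_dist y y' j
    nlinarith [dist_nonneg (x := y j) (y := y' j), dist_nonneg (x := y) (y := y')]
  calc Real.sqrt (∑ j : Fin m, dist (y j) (y' j) ^ 2)
      ≤ Real.sqrt (m * dist y y' ^ 2) := by
        apply Real.sqrt_le_sqrt
        calc ∑ j : Fin m, dist (y j) (y' j) ^ 2 ≤ ∑ _j : Fin m, dist y y' ^ 2 :=
              Finset.sum_le_sum fun j _ => hb j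
        _ = m * dist y y' ^ 2 := by simp [Finset.sum_const]
    _ = Real.sqrt m * dist y y' := by
        rw [Real.sqrt_mul (Nat.cast_nonneg m), Real.sqrt_sq dist_nonneg]
    _ = (Real.toNNReal (Real.sqrt m) : ℝ) * dist y y' := by
        rw [Real.coe_toNNReal _ (Real.sqrt_nonneg _)]

lemma hausdorff_face (m : ℕ) (i : Fin (m+1)) (a ρ : ℝ) (hρ : 0 ≤ ρ) :
    μH[(m:ℝ)] {x : EuclideanSpace ℝ (Fin (m+1)) | x i = a ∧ ∀ j, |x j - 1/2| ≤ ρ}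
      ≤ ENNReal.ofReal (Real.sqrt m) ^ m * ENNReal.ofReal (2*ρ) ^ m := by
  set S : Set (Fin m → ℝ) := univ.pi fun _ => Icc (1/2 - ρ) (1/2 + ρ) with hS
  have hsubset : {x : EuclideanSpace ℝ (Fin (m+1)) | x i = a ∧ ∀ j, |x j - 1/2| ≤ ρ}
      ⊆ faceMap m i a '' S := by
    rintro x ⟨hx1, hx2⟩
    refine ⟨fun j => x (i.succAbove j), ?_, ?_⟩
    · intro j _
      have := hx2 (i.succAbove j)
      rw [abs_le] at this
      constructor <;> linarith [this.1, this.2]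
    · show (WithLp.equiv 2 (Fin (m+1) → ℝ)).symm _ = x
      rw [Equiv.symm_apply_eq]
      have : (fun j => x (i.succAbove j)) = i.removeNth ((WithLp.equiv 2 (Fin (m+1) → ℝ)) x) := rfl
      rw [this, ← hx1]
      exact Fin.insertNth_self_removeNth i _
  calc μH[(m:ℝ)] {x : EuclideanSpace ℝ (Fin (m+1)) | x i = a ∧ ∀ j, |x j - 1/2| ≤ ρ}
      ≤ μH[(m:ℝ)] (faceMap m i a '' S) := measure_mono hsubset
    _ ≤ (Real.toNNReal (Real.sqrt m) : ℝ≥0∞) ^ (m:ℝ) * μH[(m:ℝ)] S :=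
        (lipschitz_faceMap m i a).hausdorffMeasure_image_le (Nat.cast_nonneg m) S
    _ = ENNReal.ofReal (Real.sqrt m) ^ m * ENNReal.ofReal (2*ρ) ^ m := by
        have h1 : μH[(m:ℝ)] S = volume S := by
          have := MeasureTheory.hausdorffMeasure_pi_real (ι := Fin m)
          simp only [Fintype.card_fin] at this
          rw [this]
        rw [h1, hS, volume_pi_pi]
        simp only [Real.volume_Icc]
        rw [Finset.prod_const, Finset.card_univ, Fintype.card_fin]
        rw [ENNReal.rpow_natCast]
        have h2 : (1/2 + ρ - (1/2 - ρ)) = 2*ρ := by ring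
        rw [h2]
        rfl


lemma hausdorff_shell (m : ℕ) (ρ : ℝ) (hρ : 0 < ρ) :
    μH[(m:ℝ)] {x : EuclideanSpace ℝ (Fin (m+1)) | supDist (m+1) x = ρ}
      ≤ (2*(m+1) : ℝ≥0∞) * (ENNReal.ofReal (Real.sqrt m) ^ m * ENNReal.ofReal (2*ρ) ^ m) := by
  set B := ENNReal.ofReal (Real.sqrt m) ^ m * ENNReal.ofReal (2*ρ) ^ m with hB
  have hsubset : {x : EuclideanSpace ℝ (Fin (m+1)) | supDist (m+1) x = ρ}
      ⊆ ⋃ p : Fin (m+1) × Bool,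
        {x : EuclideanSpace ℝ (Fin (m+1)) | x p.1 = 1/2 + (if p.2 then ρ else -ρ)
          ∧ ∀ j, |x j - 1/2| ≤ ρ} := by
    intro x hx
    obtain ⟨i, hi⟩ := exists_abs_eq_of_supDist_eq (m+1) x hρ hx
    have hall : ∀ j, |x j - 1/2| ≤ ρ := fun j => hx ▸ abs_le_supDist (m+1) x j
    rcases abs_eq hρ.le |>.mp hi with h | h
    · refine mem_iUnion.mpr ⟨(i, true), ⟨?_, hall⟩⟩
      show x i = 1/2 + ρ
      linarith
    · refine mem_iUnion.mpr ⟨(i, false), ⟨?_, hall⟩⟩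
      show x i = 1/2 + -ρ
      linarith
  calc μH[(m:ℝ)] {x : EuclideanSpace ℝ (Fin (m+1)) | supDist (m+1) x = ρ}
      ≤ ∑' p : Fin (m+1) × Bool,
          μH[(m:ℝ)] {x : EuclideanSpace ℝ (Fin (m+1)) | x p.1 = 1/2 + (if p.2 then ρ else -ρ)
            ∧ ∀ j, |x j - 1/2| ≤ ρ} :=
        le_trans (measure_mono hsubset) (measure_iUnion_le _)
    _ ≤ ∑' _p : Fin (m+1) × Bool, B := by
        rw [tsum_fintype, tsum_fintype]
        exact Finset.sum_le_sum fun p _ => hausdorff_face m p.1 _ ρ hρ.le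
    _ = (2*(m+1) : ℝ≥0∞) * B := by
        rw [tsum_fintype, Finset.sum_const, Finset.card_univ]
        simp only [Fintype.card_prod, Fintype.card_fin, Fintype.card_bool, nsmul_eq_mul]
        push_cast
        ring


lemma W1_le_bound {d : ℕ} (μ ν : Measure (EuclideanSpace ℝ (Fin d)))
    (s : Set (EuclideanSpace ℝ (Fin d))) (hs : MeasurableSet s) (hμ : μ sᶜ = 0) (hν : ν sᶜ = 0)
    (C : ℝ≥0∞) (hC : ∀ x ∈ s, ∀ y ∈ s, edist x y ≤ C)
    (hmass : ν Set.univ = μ Set.univ) (h0 : μ Set.univ ≠ 0) (hfin : μ Set.univ ≠ ⊤) :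
    W1 μ ν ≤ C * μ Set.univ := by
  haveI : IsFiniteMeasure μ := ⟨lt_top_iff_ne_top.mpr hfin⟩
  haveI : IsFiniteMeasure ν := ⟨by rw [hmass]; exact lt_top_iff_ne_top.mpr hfin⟩
  set M := μ Set.univ with hM
  set γ : Measure (EuclideanSpace ℝ (Fin d) × EuclideanSpace ℝ (Fin d)) := M⁻¹ • (μ.prod ν)
    with hγdef
  have hγ : γ ∈ couplings μ ν := by
    constructor
    · rw [hγdef, Measure.map_smul, Measure.map_fst_prod, hmass, smul_smul,
        ENNReal.inv_mul_cancel h0 hfin, one_smul]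
    · rw [hγdef, Measure.map_smul, Measure.map_snd_prod, smul_smul,
        ENNReal.inv_mul_cancel h0 hfin, one_smul]
  have hW : W1 μ ν ≤ ∫⁻ z, edist z.1 z.2 ∂γ := iInf₂_le γ hγ
  have hnull : (μ.prod ν) ((s ×ˢ s)ᶜ) = 0 := by
    have hsub : (s ×ˢ s)ᶜ ⊆ (sᶜ ×ˢ (univ : Set (EuclideanSpace ℝ (Fin d))))
        ∪ ((univ : Set (EuclideanSpace ℝ (Fin d))) ×ˢ sᶜ) := by
      intro z hz
      simp only [mem_compl_iff, mem_prod, mem_union, mem_univ, and_true, true_and] at *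
      tauto
    refine measure_mono_null hsub (measure_union_null ?_ ?_)
    · rw [Measure.prod_prod, hμ, zero_mul]
    · rw [Measure.prod_prod, hν, mul_zero]
  have hint : ∫⁻ z, edist z.1 z.2 ∂(μ.prod ν) ≤ C * (M * M) := by
    rw [← lintegral_add_compl (fun z => edist z.1 z.2) (hs.prod hs)]
    have h2 : ∫⁻ z in (s ×ˢ s)ᶜ, edist z.1 z.2 ∂(μ.prod ν) = 0 :=
      setLIntegral_measure_zero _ _ hnull
    have h1 : ∫⁻ z in s ×ˢ s, edist z.1 z.2 ∂(μ.prod ν) ≤ C * (M * M) := by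
      calc ∫⁻ z in s ×ˢ s, edist z.1 z.2 ∂(μ.prod ν)
          ≤ ∫⁻ _z in s ×ˢ s, C ∂(μ.prod ν) :=
            setLIntegral_mono measurable_const (fun z hz => hC z.1 hz.1 z.2 hz.2)
        _ = C * (μ.prod ν) (s ×ˢ s) := setLIntegral_const _ _
        _ ≤ C * (M * M) := by
            rw [Measure.prod_prod]
            exact mul_le_mul_right (mul_le_mul' (measure_mono (subset_univ s))
              (hmass ▸ measure_mono (subset_univ s))) C
    rw [h2, add_zero]
    exact h1
  calc W1 μ ν ≤ ∫⁻ z, edist z.1 z.2 ∂γ := hW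
    _ = M⁻¹ * ∫⁻ z, edist z.1 z.2 ∂(μ.prod ν) := by
        rw [hγdef, lintegral_smul_measure, smul_eq_mul]
    _ ≤ M⁻¹ * (C * (M * M)) := mul_le_mul_right hint _
    _ = C * M * (M⁻¹ * M) := by ring
    _ = C * M := by rw [ENNReal.inv_mul_cancel h0 hfin, mul_one]


-- the bump function
def phi (d : ℕ) (r : ℝ) (x : EuclideanSpace ℝ (Fin d)) : ℝ := max 0 (1 - supDist d x / r)
def sC (d : ℕ) (r : ℝ) : ℝ := ∫ x in unitCube d, phi d r x
def bump (d : ℕ) (r : ℝ) (x : EuclideanSpace ℝ (Fin d)) : ℝ := phi d r x - sC d r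

variable {d : ℕ} {r : ℝ}

lemma continuous_phi (d : ℕ) (r : ℝ) : Continuous (phi d r) :=
  continuous_const.max (continuous_const.sub ((continuous_supDist d).div_const r))

lemma continuous_bump (d : ℕ) (r : ℝ) : Continuous (bump d r) :=
  (continuous_phi d r).sub continuous_const

lemma phi_nonneg (x : EuclideanSpace ℝ (Fin d)) : 0 ≤ phi d r x := le_max_left _ _

lemma phi_le_one (hr : 0 < r) (x : EuclideanSpace ℝ (Fin d)) : phi d r x ≤ 1 := by
  rw [phi, max_le_iff]
  have := supDist_nonneg d x
  have : 0 ≤ supDist d x / r := by positivity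
  constructor <;> linarith

lemma integrableOn_phi (d : ℕ) (r : ℝ) : IntegrableOn (phi d r) (unitCube d) :=
  (continuous_phi d r).continuousOn.integrableOn_compact (isCompact_unitCube d)

lemma integrableOn_bump (d : ℕ) (r : ℝ) : IntegrableOn (bump d r) (unitCube d) :=
  (continuous_bump d r).continuousOn.integrableOn_compact (isCompact_unitCube d)

lemma integrableOn_abs_bump (d : ℕ) (r : ℝ) :
    IntegrableOn (fun x => |bump d r x|) (unitCube d) :=
  (continuous_bump d r).abs.continuousOn.integrableOn_compact (isCompact_unitCube d)

lemma phi_ge_half (hr : 0 < r) {x : EuclideanSpace ℝ (Fin d)}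
    (hx : x ∈ box d (1/2 - r/2) (1/2 + r/2)) : 1/2 ≤ phi d r x := by
  have hsd : supDist d x ≤ r/2 := by
    apply supDist_le d x (by linarith)
    intro i
    have := hx i
    rw [abs_le]
    constructor <;> [linarith [this.1]; linarith [this.2]]
  have : supDist d x / r ≤ 1/2 := by
    rw [div_le_iff₀ hr]; linarith
  calc (1:ℝ)/2 ≤ 1 - supDist d x / r := by linarith
  _ ≤ phi d r x := le_max_right _ _

lemma phi_eq_zero (hr : 0 < r) {x : EuclideanSpace ℝ (Fin d)}
    (hx : x ∉ box d (1/2 - r) (1/2 + r)) : phi d r x = 0 := by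
  have : ∃ i, ¬ (x i ∈ Icc (1/2 - r) (1/2 + r)) := by
    by_contra hcon
    push_neg at hcon
    exact hx fun i => hcon i
  obtain ⟨i, hi⟩ := this
  rw [mem_Icc] at hi
  push_neg at hi
  have habs : r < |x i - 1/2| := by
    rcases le_or_gt (1/2 - r) (x i) with h | h
    · have := hi h
      rw [abs_of_pos (by linarith)] <;> linarith
    · rw [abs_of_neg (by linarith)]; linarith
  have hsd : r < supDist d x := lt_of_lt_of_le habs (abs_le_supDist d x i)
  rw [phi, max_eq_left]
  rw [sub_nonpos, le_div_iff₀ hr]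
  linarith

lemma box_subset_unitCube (hr0 : 0 < r) (hr : r ≤ 1/4) :
    box d (1/2 - r/2) (1/2 + r/2) ⊆ unitCube d := by
  intro x hx i
  have := hx i
  rw [mem_Icc] at *
  constructor <;> [linarith [this.1]; linarith [this.2]]

lemma sC_pos (hr0 : 0 < r) (hr : r ≤ 1/4) : 0 < sC d r := by
  have hsub := box_subset_unitCube (d := d) hr0 hr
  have hmb : MeasurableSet (box d (1/2 - r/2) (1/2 + r/2)) := (isClosed_box d _ _).measurableSet
  have hvol : volume (box d (1/2 - r/2) (1/2 + r/2)) = ENNReal.ofReal r ^ d := by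
    rw [volume_box]; congr 1; congr 1; ring
  have hlow : (1/2 : ℝ) * (volume (box d (1/2 - r/2) (1/2 + r/2))).toReal
      ≤ ∫ x in box d (1/2 - r/2) (1/2 + r/2), phi d r x := by
    apply setIntegral_ge_of_const_le_real hmb
    · rw [hvol]; exact pow_ne_top ofReal_ne_top
    · exact fun x hx => phi_ge_half hr0 hx
    · exact (integrableOn_phi d r).mono_set hsub
  have hmono : ∫ x in box d (1/2 - r/2) (1/2 + r/2), phi d r x ≤ sC d r := by
    apply setIntegral_mono_set (integrableOn_phi d r)
    · exact Filter.Eventually.of_forall fun x => phi_nonneg x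
    · exact Filter.Eventually.of_forall hsub
  have hv : (volume (box d (1/2 - r/2) (1/2 + r/2))).toReal = r ^ d := by
    rw [hvol, ENNReal.toReal_pow, ENNReal.toReal_ofReal hr0.le]
  have : 0 < (1/2 : ℝ) * r ^ d := by positivity
  rw [← hv] at this
  linarith

lemma sC_le (hr0 : 0 < r) : sC d r ≤ (2*r) ^ d := by
  set Br := box d (1/2 - r) (1/2 + r) with hBr
  have hmb : MeasurableSet Br := (isClosed_box d _ _).measurableSet
  have hsplit : (∫ x in unitCube d ∩ Br, phi d r x) + ∫ x in unitCube d \ Br, phi d r x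
      = sC d r := integral_inter_add_diff hmb (integrableOn_phi d r)
  have hzero : ∫ x in unitCube d \ Br, phi d r x = 0 :=
    setIntegral_eq_zero_of_forall_eq_zero fun x hx => phi_eq_zero hr0 hx.2
  have hble : ∫ x in unitCube d ∩ Br, phi d r x ≤ (2*r) ^ d := by
    have h1 : ∫ x in unitCube d ∩ Br, phi d r x ≤ ∫ _x in unitCube d ∩ Br, (1:ℝ) := by
      apply setIntegral_mono_on ((integrableOn_phi d r).mono_set inter_subset_left)
        (integrableOn_const (lt_top_iff_ne_top.mp ?_)) ((measurableSet_unitCube d).inter hmb)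
      · exact fun x _ => phi_le_one hr0 x
      · exact lt_of_le_of_lt (measure_mono inter_subset_left)
          (by rw [volume_unitCube]; exact one_lt_top)
    have h2 : ∫ _x in unitCube d ∩ Br, (1:ℝ) = (volume (unitCube d ∩ Br)).toReal := by
      rw [setIntegral_const]; simp [Measure.real]
    have h3 : (volume (unitCube d ∩ Br)).toReal ≤ (2*r) ^ d := by
      have hb : volume Br = ENNReal.ofReal (2*r) ^ d := by
        rw [hBr, volume_box]; congr 1; congr 1; ring
      have : volume (unitCube d ∩ Br) ≤ volume Br :=
        measure_mono inter_subset_right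
      calc (volume (unitCube d ∩ Br)).toReal ≤ (volume Br).toReal := by
            apply ENNReal.toReal_mono _ this
            rw [hb]; exact pow_ne_top ofReal_ne_top
      _ = (2*r) ^ d := by rw [hb, ENNReal.toReal_pow, ENNReal.toReal_ofReal (by linarith)]
    linarith
  linarith

-- abbreviations
lemma integral_bump (d : ℕ) (r : ℝ) : ∫ x in unitCube d, bump d r x = 0 := by
  have : ∫ x in unitCube d, bump d r x
      = (∫ x in unitCube d, phi d r x) - ∫ _x in unitCube d, sC d r :=
    integral_sub (integrableOn_phi d r) (integrableOn_const (lt_top_iff_ne_top.mp (by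
      rw [volume_unitCube]; exact one_lt_top)))
  rw [this, setIntegral_const, measureReal_def, volume_unitCube]
  simp [sC]

def LL1 (d : ℕ) (r : ℝ) : ℝ := ∫ x in unitCube d, |bump d r x|

lemma abs_bump_le_one (hr0 : 0 < r) (hs0 : 0 ≤ sC d r) (hs1 : sC d r ≤ 1)
    (x : EuclideanSpace ℝ (Fin d)) : |bump d r x| ≤ 1 := by
  rw [bump, abs_le]
  have h1 := phi_nonneg (d := d) (r := r) x
  have h2 := phi_le_one hr0 x
  constructor <;> linarith

lemma LL1_lower (hr0 : 0 < r) (hr : r ≤ 1/4) (hs : sC d r ≤ 1/4) :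
    (1/4 : ℝ) * r ^ d ≤ LL1 d r := by
  have hsub := box_subset_unitCube (d := d) hr0 hr
  have hmb : MeasurableSet (box d (1/2 - r/2) (1/2 + r/2)) := (isClosed_box d _ _).measurableSet
  have hvol : volume (box d (1/2 - r/2) (1/2 + r/2)) = ENNReal.ofReal r ^ d := by
    rw [volume_box]; congr 1; congr 1; ring
  have hlow : (1/4 : ℝ) * (volume (box d (1/2 - r/2) (1/2 + r/2))).toReal
      ≤ ∫ x in box d (1/2 - r/2) (1/2 + r/2), |bump d r x| := by
    apply setIntegral_ge_of_const_le_real hmb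
    · rw [hvol]; exact pow_ne_top ofReal_ne_top
    · intro x hx
      have := phi_ge_half hr0 hx
      rw [bump, abs_of_nonneg (by linarith)]
      linarith
    · exact (integrableOn_abs_bump d r).mono_set hsub
  have hmono : ∫ x in box d (1/2 - r/2) (1/2 + r/2), |bump d r x| ≤ LL1 d r := by
    apply setIntegral_mono_set (integrableOn_abs_bump d r)
    · exact Filter.Eventually.of_forall fun x => abs_nonneg _
    · exact Filter.Eventually.of_forall hsub
  have hv : (volume (box d (1/2 - r/2) (1/2 + r/2))).toReal = r ^ d := by
    rw [hvol, ENNReal.toReal_pow, ENNReal.toReal_ofReal hr0.le]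
  rw [← hv]
  linarith

lemma LL1_pos (hr0 : 0 < r) (hr : r ≤ 1/4) (hs : sC d r ≤ 1/4) : 0 < LL1 d r :=
  lt_of_lt_of_le (by positivity) (LL1_lower hr0 hr hs)

-- positive part integral
def PP (d : ℕ) (r : ℝ) : ℝ := ∫ x in unitCube d, max (bump d r x) 0

lemma PP_eq_NN (d : ℕ) (r : ℝ) :
    PP d r = ∫ x in unitCube d, max (-(bump d r x)) 0 := by
  have hpos : IntegrableOn (fun x => max (bump d r x) 0) (unitCube d) :=
    ((continuous_bump d r).max continuous_const).continuousOn.integrableOn_compact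
      (isCompact_unitCube d)
  have hneg : IntegrableOn (fun x => max (-(bump d r x)) 0) (unitCube d) :=
    ((continuous_bump d r).neg.max continuous_const).continuousOn.integrableOn_compact
      (isCompact_unitCube d)
  have key : (∫ x in unitCube d, max (bump d r x) 0) - ∫ x in unitCube d, max (-(bump d r x)) 0
      = ∫ x in unitCube d, bump d r x := by
    rw [← integral_sub hpos hneg]
    congr 1
    funext x
    rcases le_total (bump d r x) 0 with h | h
    · rw [max_eq_right h, max_eq_left (by linarith)]; ring
    · rw [max_eq_left h, max_eq_right (by linarith)]; ring
  rw [integral_bump] at key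
  rw [PP]
  linarith

lemma PP_le_LL1 (d : ℕ) (r : ℝ) : PP d r ≤ LL1 d r := by
  apply setIntegral_mono_on
    (((continuous_bump d r).max continuous_const).continuousOn.integrableOn_compact
      (isCompact_unitCube d))
    (integrableOn_abs_bump d r) (measurableSet_unitCube d)
  intro x _
  rw [max_le_iff]
  exact ⟨le_abs_self _, abs_nonneg _⟩

lemma PP_pos (hr0 : 0 < r) (hr : r ≤ 1/4) (hs : sC d r ≤ 1/4) : 0 < PP d r := by
  have h2 : LL1 d r = PP d r + ∫ x in unitCube d, max (-(bump d r x)) 0 := by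
    rw [LL1, PP, ← integral_add (f := fun x => max (bump d r x) 0) (g := fun x => max (-(bump d r x)) 0)
      (((continuous_bump d r).max continuous_const).continuousOn.integrableOn_compact
        (isCompact_unitCube d))
      (((continuous_bump d r).neg.max continuous_const).continuousOn.integrableOn_compact
        (isCompact_unitCube d))]
    apply setIntegral_congr_fun (measurableSet_unitCube d)
    intro x _
    show |bump d r x| = max (bump d r x) 0 + max (-(bump d r x)) 0
    rcases le_total (bump d r x) 0 with h | h
    · rw [abs_of_nonpos h, max_eq_right h, max_eq_left (by linarith)]; ring
    · rw [abs_of_nonneg h, max_eq_left h, max_eq_right (by linarith)]; ring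
  rw [← PP_eq_NN] at h2
  have := LL1_pos hr0 hr hs
  linarith

lemma muPlus_compl (d : ℕ) (f : EuclideanSpace ℝ (Fin d) → ℝ) :
    muPlus d f (unitCube d)ᶜ = 0 := by
  rw [muPlus, withDensity_apply _ (measurableSet_unitCube d).compl,
    Measure.restrict_restrict (measurableSet_unitCube d).compl, compl_inter_self,
    Measure.restrict_empty, lintegral_zero_measure]

lemma muPlus_univ_of_continuous (d : ℕ) (f : EuclideanSpace ℝ (Fin d) → ℝ)
    (hf : Continuous f) :
    muPlus d f Set.univ = ENNReal.ofReal (∫ x in unitCube d, max (f x) 0) := by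
  rw [muPlus, withDensity_apply _ MeasurableSet.univ, Measure.restrict_univ]
  have h1 : ∫⁻ x, ENNReal.ofReal (f x) ∂(volume.restrict (unitCube d))
      = ∫⁻ x, ENNReal.ofReal (max (f x) 0) ∂(volume.restrict (unitCube d)) := by
    congr 1
    funext x
    rcases le_total (f x) 0 with h | h
    · rw [max_eq_right h, ENNReal.ofReal_of_nonpos h, ENNReal.ofReal_zero]
    · rw [max_eq_left h]
  rw [h1, ← ofReal_integral_eq_lintegral_ofReal]
  · exact (hf.max continuous_const).continuousOn.integrableOn_compact (isCompact_unitCube d)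
  · exact Filter.Eventually.of_forall fun x => le_max_right _ _

lemma norm_le_sqrt_of_mem_unitCube {d : ℕ} {x : EuclideanSpace ℝ (Fin d)}
    (hx : x ∈ unitCube d) : ‖x‖ ≤ Real.sqrt d := by
  rw [EuclideanSpace.norm_eq]
  apply Real.sqrt_le_sqrt
  calc ∑ i, ‖x i‖ ^ 2 ≤ ∑ _i : Fin d, (1:ℝ) := by
        apply Finset.sum_le_sum
        intro i _
        have h := hx i
        rw [Real.norm_eq_abs, abs_of_nonneg h.1]
        nlinarith [h.1, h.2]
  _ = d := by simp

lemma edist_le_of_mem_unitCube {d : ℕ} {x y : EuclideanSpace ℝ (Fin d)}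
    (hx : x ∈ unitCube d) (hy : y ∈ unitCube d) :
    edist x y ≤ ENNReal.ofReal (2 * Real.sqrt d) := by
  rw [edist_dist]
  apply ENNReal.ofReal_le_ofReal
  calc dist x y ≤ ‖x‖ + ‖y‖ := dist_le_norm_add_norm x y
  _ ≤ 2 * Real.sqrt d := by
      have := norm_le_sqrt_of_mem_unitCube hx
      have := norm_le_sqrt_of_mem_unitCube hy
      linarith

lemma bump_zero_set (hr0 : 0 < r) (hs0 : 0 < sC d r) (hs1 : sC d r < 1)
    {x : EuclideanSpace ℝ (Fin d)} (hx : bump d r x = 0) :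
    supDist d x = r * (1 - sC d r) := by
  have h : phi d r x = sC d r := by rw [bump] at hx; linarith
  rcases le_or_gt (1 - supDist d x / r) 0 with hc | hc
  · rw [phi, max_eq_left hc] at h
    linarith
  · rw [phi, max_eq_right hc.le] at h
    have : supDist d x / r = 1 - sC d r := by linarith
    field_simp at this
    linarith

def center (d : ℕ) : EuclideanSpace ℝ (Fin d) :=
  (WithLp.equiv 2 (Fin d → ℝ)).symm (fun _ => 1/2)

lemma center_apply (d : ℕ) (i : Fin d) : center d i = 1/2 := rfl

lemma center_mem_unitCube (d : ℕ) : center d ∈ unitCube d := by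
  intro i
  rw [center_apply]
  constructor <;> norm_num

lemma supDist_center (d : ℕ) : supDist d (center d) = 0 := by
  rw [supDist]
  have : (WithLp.equiv 2 (Fin d → ℝ)) (center d) = fun _ => 1/2 := rfl
  rw [this, sub_self, norm_zero]

lemma bump_center (d : ℕ) (r : ℝ) : bump d r (center d) = 1 - sC d r := by
  rw [bump, phi, supDist_center, zero_div, sub_zero, max_eq_right zero_le_one]

lemma exists_r (β ε : ℝ) (hβ : 0 < β) (hε : 0 < ε) :
    ∃ r : ℝ, 0 < r ∧ r ≤ 1/4 ∧ r ^ β < ε := by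
  set ε' := min ε 1 / 2 with hε'def
  have hε'0 : 0 < ε' := by
    rw [hε'def]
    have : 0 < min ε 1 := lt_min hε one_pos
    linarith
  have hε'lt : ε' < ε := by
    rw [hε'def]
    have h1 : min ε 1 ≤ ε := min_le_left _ _
    linarith
  refine ⟨min (1/4) (ε' ^ β⁻¹), lt_min (by norm_num) (Real.rpow_pos_of_pos hε'0 _),
    min_le_left _ _, ?_⟩
  calc (min (1/4) (ε' ^ β⁻¹)) ^ β ≤ (ε' ^ β⁻¹) ^ β := by
        apply Real.rpow_le_rpow (le_min (by norm_num) (Real.rpow_pos_of_pos hε'0 _).le)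
          (min_le_right _ _) hβ.le
  _ = ε' := Real.rpow_inv_rpow hε'0.le hβ.ne'
  _ < ε := hε'lt



set_option maxHeartbeats 1000000 in
theorem sharpness_of_exponent (d : ℕ) (hd : 2 ≤ d) (α : ℝ) (hα0 : 0 ≤ α)
    (hα : α < ((d : ℝ) - 1) / d) (c : ℝ) (hc : 0 < c) :
    ∃ f : EuclideanSpace ℝ (Fin d) → ℝ,
      ContinuousOn f (unitCube d) ∧
      (∫ x in unitCube d, f x) = 0 ∧
      (∃ x ∈ unitCube d, f x ≠ 0) ∧
      W1 (muPlus d f) (muPlus d (fun x => - f x))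
          * μH[(d : ℝ) - 1] {x ∈ openUnitCube d | f x = 0}
        < ENNReal.ofReal
            (c * ((∫ x in unitCube d, |f x|) / sSup ((fun x => |f x|) '' unitCube d)) ^ α
              * (∫ x in unitCube d, |f x|)) := by
  obtain ⟨m, rfl⟩ : ∃ m, d = m + 1 := ⟨d - 1, by omega⟩
  have hm : 1 ≤ m := by omega
  have hm0 : (0:ℝ) < m := by exact_mod_cast hm
  have hcast : ((m+1 : ℕ) : ℝ) = (m:ℝ) + 1 := by push_cast; ring
  -- exponent gap
  have hαm : ((m:ℝ)+1) * α < m := by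
    have hden : (0:ℝ) < (m:ℝ)+1 := by positivity
    rw [hcast] at hα
    have h2 : α < (m:ℝ)/((m:ℝ)+1) := by
      have : ((m:ℝ)+1) - 1 = (m:ℝ) := by ring
      rwa [this] at hα
    calc ((m:ℝ)+1)*α < ((m:ℝ)+1) * ((m:ℝ)/((m:ℝ)+1)) := mul_lt_mul_of_pos_left h2 hden
    _ = m := by field_simp
  set β : ℝ := (m:ℝ) - ((m:ℝ)+1)*α with hβdef
  have hβ : 0 < β := by rw [hβdef]; linarith
  set K : ℝ := 4 * ((m:ℝ)+1) * Real.sqrt ((m:ℝ)+1) * (2*Real.sqrt ((m:ℝ)+1)) ^ m with hKdef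
  have hsq1 : 0 < Real.sqrt ((m:ℝ)+1) := Real.sqrt_pos.mpr (by positivity)
  have hK0 : 0 < K := by positivity
  have hε : 0 < c * (1/4:ℝ) ^ α / K := by positivity
  obtain ⟨r, hr0, hr4, hrβ⟩ := exists_r β (c * (1/4:ℝ)^α / K) hβ hε
  -- properties of s
  have hs0 : 0 < sC (m+1) r := sC_pos hr0 hr4
  have hsle : sC (m+1) r ≤ 1/4 := by
    have h1 := sC_le (d := m+1) (r := r) hr0
    have h2 : (2*r) ≤ 1/2 := by linarith
    have h3 : (2*r)^(m+1) ≤ (1/2:ℝ)^(m+1) :=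
      pow_le_pow_left₀ (by linarith) h2 _
    have h4 : (1/2:ℝ)^(m+1) ≤ (1/2:ℝ)^2 :=
      pow_le_pow_of_le_one (by norm_num) (by norm_num) (by omega)
    norm_num at h4
    linarith
  set f : EuclideanSpace ℝ (Fin (m+1)) → ℝ := bump (m+1) r with hfdef
  refine ⟨f, (continuous_bump _ _).continuousOn, integral_bump _ _,
    ⟨center (m+1), center_mem_unitCube _, ?_⟩, ?_⟩
  · rw [hfdef, bump_center]
    intro h
    linarith
  -- main inequality
  set L1 : ℝ := ∫ x in unitCube (m+1), |f x| with hL1def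
  set Linf : ℝ := sSup ((fun x => |f x|) '' unitCube (m+1)) with hLinfdef
  set P : ℝ := PP (m+1) r with hPdef
  have hL1pos : 0 < L1 := LL1_pos hr0 hr4 hsle
  have hL1low : (1/4:ℝ) * r^(m+1) ≤ L1 := LL1_lower hr0 hr4 hsle
  have hPpos : 0 < P := PP_pos hr0 hr4 hsle
  have hPle : P ≤ L1 := PP_le_LL1 _ _
  set ρ : ℝ := r * (1 - sC (m+1) r) with hρdef
  have hρ0 : 0 < ρ := mul_pos hr0 (by linarith)
  have hρr : ρ ≤ r := by nlinarith
  have hLinf_le : Linf ≤ 1 := by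
    apply Real.sSup_le _ zero_le_one
    rintro y ⟨x, hx, rfl⟩
    exact abs_bump_le_one hr0 hs0.le (by linarith) x
  have hLinf_ge : 0 < Linf := by
    have hbdd : BddAbove ((fun x => |f x|) '' unitCube (m+1)) := by
      refine ⟨1, ?_⟩
      rintro y ⟨x, hx, rfl⟩
      exact abs_bump_le_one hr0 hs0.le (by linarith) x
    have hmem : |f (center (m+1))| ∈ (fun x => |f x|) '' unitCube (m+1) :=
      ⟨center (m+1), center_mem_unitCube _, rfl⟩
    have h1 : |f (center (m+1))| = 1 - sC (m+1) r := by
      rw [hfdef, bump_center, abs_of_nonneg (by linarith)]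
    have := le_csSup hbdd hmem
    rw [h1] at this
    linarith
  -- W1 bound
  have hμf : muPlus (m+1) f Set.univ = ENNReal.ofReal P :=
    muPlus_univ_of_continuous _ _ (continuous_bump _ _)
  have hμg : muPlus (m+1) (fun x => -f x) Set.univ = ENNReal.ofReal P := by
    have := muPlus_univ_of_continuous (m+1) (fun x => -f x) (continuous_bump (m+1) r).neg
    rw [this, hPdef, PP_eq_NN]
  have hcastE : ENNReal.ofReal (2*Real.sqrt ((m+1:ℕ):ℝ)) =
      ENNReal.ofReal (2*Real.sqrt ((m:ℝ)+1)) := by rw [hcast]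
  have hW1 : W1 (muPlus (m+1) f) (muPlus (m+1) fun x => -f x)
      ≤ ENNReal.ofReal (2*Real.sqrt ((m:ℝ)+1)) * ENNReal.ofReal P := by
    have hb := W1_le_bound (muPlus (m+1) f) (muPlus (m+1) fun x => -f x) (unitCube (m+1))
      (measurableSet_unitCube _) (muPlus_compl _ _) (muPlus_compl _ _)
      (ENNReal.ofReal (2*Real.sqrt ((m:ℝ)+1)))
      (fun x hx y hy => (edist_le_of_mem_unitCube hx hy).trans (le_of_eq hcastE))
      (by rw [hμf, hμg])
      (by rw [hμf]; simp only [ne_eq, ENNReal.ofReal_eq_zero, not_le]; exact hPpos)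
      (by rw [hμf]; exact ofReal_ne_top)
    rwa [hμf] at hb
  -- Hausdorff bound
  have hHsub : {x ∈ openUnitCube (m+1) | f x = 0}
      ⊆ {x : EuclideanSpace ℝ (Fin (m+1)) | supDist (m+1) x = ρ} := by
    rintro x ⟨-, hx⟩
    exact bump_zero_set hr0 hs0 (by linarith) hx
  have hexp : ((m+1:ℕ):ℝ) - 1 = (m:ℝ) := by push_cast; ring
  have hofR : (2*((m:ℕ):ℝ≥0∞)+2) = ENNReal.ofReal (2*((m:ℝ)+1)) := by
    rw [ENNReal.ofReal_mul (by norm_num), ENNReal.ofReal_add (by positivity) (by norm_num)]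
    rw [ENNReal.ofReal_natCast, ENNReal.ofReal_one]
    norm_num
    ring
  have hH : μH[((m+1:ℕ):ℝ) - 1] {x ∈ openUnitCube (m+1) | f x = 0}
      ≤ ENNReal.ofReal (2*((m:ℝ)+1) * (Real.sqrt m ^ m * (2*ρ)^m)) := by
    rw [hexp]
    calc μH[(m:ℝ)] {x ∈ openUnitCube (m+1) | f x = 0}
        ≤ μH[(m:ℝ)] {x : EuclideanSpace ℝ (Fin (m+1)) | supDist (m+1) x = ρ} :=
          measure_mono hHsub
      _ ≤ (2*((m:ℕ):ℝ≥0∞)+1*2) * (ENNReal.ofReal (Real.sqrt m) ^ m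
            * ENNReal.ofReal (2*ρ) ^ m) := by
          have := hausdorff_shell m ρ hρ0
          convert this using 2
          ring
      _ = ENNReal.ofReal (2*((m:ℝ)+1) * (Real.sqrt m ^ m * (2*ρ)^m)) := by
          rw [ENNReal.ofReal_mul (by positivity : (0:ℝ) ≤ 2*((m:ℝ)+1)),
            ENNReal.ofReal_mul (pow_nonneg (Real.sqrt_nonneg _) m),
            ENNReal.ofReal_pow (Real.sqrt_nonneg _),
            ENNReal.ofReal_pow (by linarith : (0:ℝ) ≤ 2*ρ), ← hofR]
          ring
  -- real number endgame
  set W : ℝ := 2*Real.sqrt ((m:ℝ)+1) * P with hWdef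
  set H : ℝ := 2*((m:ℝ)+1) * (Real.sqrt m ^ m * (2*ρ)^m) with hHdef
  have hWH : W * H ≤ K * (L1 * r ^ m) := by
    have e1 : Real.sqrt (m:ℝ) ^ m * (2*ρ)^m ≤ Real.sqrt ((m:ℝ)+1) ^ m * (2*r)^m := by
      apply mul_le_mul
      · exact pow_le_pow_left₀ (Real.sqrt_nonneg _) (Real.sqrt_le_sqrt (by linarith)) m
      · exact pow_le_pow_left₀ (by linarith) (by linarith) m
      · exact pow_nonneg (by linarith) m
      · exact pow_nonneg (Real.sqrt_nonneg _) m
    have e2 : H ≤ 2*((m:ℝ)+1)*(Real.sqrt ((m:ℝ)+1)^m * (2*r)^m) := by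
      rw [hHdef]
      exact mul_le_mul_of_nonneg_left e1 (by positivity)
    have e3 : W ≤ 2*Real.sqrt ((m:ℝ)+1)*L1 := by
      rw [hWdef]
      exact mul_le_mul_of_nonneg_left hPle (by positivity)
    have hWnn : 0 ≤ W := by rw [hWdef]; positivity
    have hHnn : 0 ≤ H := by
      rw [hHdef]
      apply mul_nonneg (by positivity)
      exact mul_nonneg (pow_nonneg (Real.sqrt_nonneg _) m) (pow_nonneg (by linarith) m)
    calc W * H ≤ (2*Real.sqrt ((m:ℝ)+1)*L1) * (2*((m:ℝ)+1)*(Real.sqrt ((m:ℝ)+1)^m * (2*r)^m)) :=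
          mul_le_mul e3 e2 hHnn (by positivity)
    _ = K * (L1 * r ^ m) := by rw [hKdef]; ring
  have hstepA : K * r ^ m < c * L1 ^ α := by
    have h2 : ((1/4:ℝ) * r^(m+1))^α = (1/4:ℝ)^α * r^(((m:ℝ)+1)*α) := by
      rw [Real.mul_rpow (by norm_num) (by positivity), ← Real.rpow_natCast r (m+1),
        ← Real.rpow_mul hr0.le]
      rw [hcast]
    have h3 : r^(m:ℕ) = r^(((m:ℝ)+1)*α) * r^β := by
      rw [← Real.rpow_natCast r m, ← Real.rpow_add hr0]
      congr 1
      rw [hβdef]; ring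
    have h4 : K * r^β < c * (1/4:ℝ)^α := by
      rw [lt_div_iff₀ hK0] at hrβ
      linarith [hrβ]
    have h1 : c * ((1/4:ℝ) * r^(m+1))^α ≤ c * L1^α :=
      mul_le_mul_of_nonneg_left (Real.rpow_le_rpow (by positivity) hL1low hα0) hc.le
    calc K * r^(m:ℕ) = (K * r^β) * r^(((m:ℝ)+1)*α) := by rw [h3]; ring
    _ < (c * (1/4:ℝ)^α) * r^(((m:ℝ)+1)*α) :=
        mul_lt_mul_of_pos_right h4 (Real.rpow_pos_of_pos hr0 _)
    _ = c * ((1/4:ℝ) * r^(m+1))^α := by rw [h2]; ring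
    _ ≤ c * L1^α := h1
  have hdiv : L1 ≤ L1 / Linf := by
    rw [le_div_iff₀ hLinf_ge]
    nlinarith
  have hfinal : W * H < c * (L1 / Linf) ^ α * L1 := by
    have hB1 : K * (L1 * r ^ m) < c * L1^α * L1 := by
      have := mul_lt_mul_of_pos_right hstepA hL1pos
      calc K * (L1 * r^m) = K * r^m * L1 := by ring
      _ < c * L1^α * L1 := this
    have hB2 : c * L1^α * L1 ≤ c * (L1 / Linf) ^ α * L1 :=
      mul_le_mul_of_nonneg_right
        (mul_le_mul_of_nonneg_left (Real.rpow_le_rpow hL1pos.le hdiv hα0) hc.le) hL1pos.le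
    linarith [hWH]
  have hB : 0 < c * (L1 / Linf) ^ α * L1 :=
    mul_pos (mul_pos hc (Real.rpow_pos_of_pos (div_pos hL1pos hLinf_ge) α)) hL1pos
  calc W1 (muPlus (m+1) f) (muPlus (m+1) fun x => -f x)
        * μH[((m+1:ℕ):ℝ) - 1] {x ∈ openUnitCube (m+1) | f x = 0}
      ≤ (ENNReal.ofReal (2*Real.sqrt ((m:ℝ)+1)) * ENNReal.ofReal P)
          * ENNReal.ofReal (2*((m:ℝ)+1) * (Real.sqrt m ^ m * (2*ρ)^m)) :=
        mul_le_mul' hW1 hH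
    _ = ENNReal.ofReal (W * H) := by
        have h1 : (0:ℝ) ≤ 2*Real.sqrt ((m:ℝ)+1) := by positivity
        rw [← ENNReal.ofReal_mul h1, ← ENNReal.ofReal_mul (mul_nonneg h1 hPpos.le)]
    _ < ENNReal.ofReal (c * (L1 / Linf) ^ α * L1) :=
        (ENNReal.ofReal_lt_ofReal_iff hB).mpr hfinal
end
end

section
/- Fix d ≥ 1. There exists a constant c_d > 0 such that the following holds. Let μ and ν be finite Borel measures on [0,1]^d with equal total mass, and suppose μ is absolutely continuous with density bounded by L > 0 (i.e., μ(A) ≤ L · Leb(A) for all Borel sets A). Let Q ⊆ [0,1]^d be an axis-parallel cube of side length ε > 0 with μ(Q) = m > 0 and ν(Q) ≤ m/100. Then W_1(μ, ν) ≥ c_d · m² / (L · ε^{d-1}). -/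
open MeasureTheory Set ENNReal

noncomputable section

/-- A box determined by coordinatewise constraints is measurable. -/
lemma box_eq_preimage_s7 {d : ℕ} (s : Fin d → Set ℝ) :
    {x : EuclideanSpace ℝ (Fin d) | ∀ i, x i ∈ s i}
      = (MeasurableEquiv.toLp 2 (Fin d → ℝ)).symm ⁻¹' (Set.pi univ fun i => s i) := by
  ext x; simp [Set.mem_pi]

lemma box_measurable {d : ℕ} (s : Fin d → Set ℝ) (hs : ∀ i, MeasurableSet (s i)) :
    MeasurableSet {x : EuclideanSpace ℝ (Fin d) | ∀ i, x i ∈ s i} := by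
  rw [box_eq_preimage_s7]
  exact (MeasurableEquiv.toLp 2 (Fin d → ℝ)).symm.measurable (MeasurableSet.univ_pi hs)

lemma box_volume {d : ℕ} (s : Fin d → Set ℝ) (hs : ∀ i, MeasurableSet (s i)) :
    volume {x : EuclideanSpace ℝ (Fin d) | ∀ i, x i ∈ s i} = ∏ i, volume (s i) := by
  rw [box_eq_preimage_s7, (EuclideanSpace.volume_preserving_symm_measurableEquiv_toLp (Fin d)).measure_preimage
    ((MeasurableSet.univ_pi hs).nullMeasurableSet), volume_pi_pi]

lemma coord_abs_le_dist {d : ℕ} (x y : EuclideanSpace ℝ (Fin d)) (i : Fin d) :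
    |x i - y i| ≤ dist x y := by
  rw [EuclideanSpace.dist_eq, ← Real.sqrt_sq_eq_abs]
  apply Real.sqrt_le_sqrt
  have := Finset.single_le_sum (f := fun j => dist (x j) (y j) ^ 2)
    (fun j _ => sq_nonneg _) (Finset.mem_univ i)
  simpa [Real.dist_eq] using this

theorem unbalanced_cube_transport_cost (d : ℕ) (hd : 1 ≤ d) :
    ∃ c : ℝ, 0 < c ∧
      ∀ (μ ν : Measure (EuclideanSpace ℝ (Fin d))),
        IsFiniteMeasure μ → IsFiniteMeasure ν →
        μ univ = ν univ →
        μ (unitCube d)ᶜ = 0 → ν (unitCube d)ᶜ = 0 →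
        ∀ L : ℝ, 0 < L →
        (∀ A : Set (EuclideanSpace ℝ (Fin d)), MeasurableSet A →
          μ A ≤ ENNReal.ofReal L * volume A) →
        ∀ (ε : ℝ) (a : Fin d → ℝ), 0 < ε →
        {x : EuclideanSpace ℝ (Fin d) | ∀ i, x i ∈ Icc (a i) (a i + ε)} ⊆ unitCube d →
        ∀ m : ℝ, 0 < m →
        μ {x : EuclideanSpace ℝ (Fin d) | ∀ i, x i ∈ Icc (a i) (a i + ε)}
          = ENNReal.ofReal m →
        ν {x : EuclideanSpace ℝ (Fin d) | ∀ i, x i ∈ Icc (a i) (a i + ε)}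
          ≤ ENNReal.ofReal (m / 100) →
        ENNReal.ofReal (c * m ^ 2 / (L * ε ^ (d - 1))) ≤ W1 μ ν := by
  refine ⟨1 / (16 * d), by positivity, ?_⟩
  intro μ ν hμf hνf hmass hμc hνc L hL hdens ε a hε hQsub m hm hμQ hνQ
  have hd0 : (0 : ℝ) < d := by exact_mod_cast hd
  set Q : Set (EuclideanSpace ℝ (Fin d)) :=
    {x | ∀ i, x i ∈ Icc (a i) (a i + ε)} with hQdef
  have hQm : MeasurableSet Q := box_measurable _ (fun i => measurableSet_Icc)
  set E : ℝ := ε ^ (d - 1) with hEdef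
  have hE : 0 < E := pow_pos hε _
  set t : ℝ := m / (8 * d * L * E) with htdef
  have htpos : 0 < t := by positivity
  -- the Lipschitz test function
  set g : EuclideanSpace ℝ (Fin d) → ℝ≥0∞ :=
    fun x => min (ENNReal.ofReal t) (EMetric.infEdist x Qᶜ) with hgdef
  have hgm : Measurable g :=
    measurable_const.min EMetric.continuous_infEdist.measurable
  have hglip : ∀ x y, g x ≤ g y + edist x y := by
    intro x y
    have h1 : EMetric.infEdist x Qᶜ ≤ EMetric.infEdist y Qᶜ + edist x y :=
      EMetric.infEdist_le_infEdist_add_edist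
    rcases le_total (ENNReal.ofReal t) (EMetric.infEdist y Qᶜ) with h | h
    · have hy : g y = ENNReal.ofReal t := min_eq_left h
      rw [hy]
      exact (min_le_left _ _).trans le_self_add
    · have hy : g y = EMetric.infEdist y Qᶜ := min_eq_right h
      rw [hy]
      exact (min_le_right _ _).trans h1
  -- bound for the ν-integral
  have hIν : ∫⁻ x, g x ∂ν ≤ ENNReal.ofReal t * ENNReal.ofReal (m / 100) := by
    have hgle : ∀ x, g x ≤ Q.indicator (fun _ => ENNReal.ofReal t) x := by
      intro x
      by_cases hx : x ∈ Q
      · rw [Set.indicator_of_mem hx]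
        exact min_le_left _ _
      · have h0 : EMetric.infEdist x Qᶜ = 0 := EMetric.infEdist_zero_of_mem hx
        simp [Set.indicator_of_notMem hx, hgdef, h0]
    calc ∫⁻ x, g x ∂ν ≤ ∫⁻ x, Q.indicator (fun _ => ENNReal.ofReal t) x ∂ν :=
          lintegral_mono hgle
      _ = ∫⁻ _ in Q, ENNReal.ofReal t ∂ν := (lintegral_indicator hQm _)
      _ = ENNReal.ofReal t * ν Q := setLIntegral_const _ _
      _ ≤ ENNReal.ofReal t * ENNReal.ofReal (m / 100) := by
          exact mul_le_mul_right hνQ _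
  have hIνfin : ∫⁻ x, g x ∂ν ≠ ∞ :=
    (hIν.trans_lt (by finiteness)).ne
  -- the inner (shrunk) cube
  set S : Set (EuclideanSpace ℝ (Fin d)) :=
    {x | ∀ i, x i ∈ Icc (a i + t) (a i + ε - t)} with hSdef
  have hSm : MeasurableSet S := box_measurable _ (fun i => measurableSet_Icc)
  -- on S, g equals t
  have hgS : ∀ x ∈ S, ENNReal.ofReal t ≤ g x := by
    intro x hx
    refine le_min le_rfl ?_
    show ENNReal.ofReal t ≤ Metric.infEDist x Qᶜ
    rw [Metric.le_infEDist]
    intro y hy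
    rw [hQdef] at hy
    simp only [Set.mem_compl_iff, Set.mem_setOf_eq, not_forall] at hy
    obtain ⟨i, hi⟩ := hy
    rw [Set.mem_Icc, not_and_or, not_le, not_le] at hi
    have hxi' : a i + t ≤ x i ∧ x i ≤ a i + ε - t := hx i
    have habs : t ≤ |x i - y i| := by
      rcases hi with hlt | hgt
      · have : t ≤ x i - y i := by linarith [hxi'.1]
        exact this.trans (le_abs_self _)
      · have : t ≤ -(x i - y i) := by linarith [hxi'.2]
        exact this.trans (neg_le_abs _)
    have hdist : t ≤ dist x y := habs.trans (coord_abs_le_dist x y i)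
    rw [edist_dist]
    exact ENNReal.ofReal_le_ofReal hdist
  have hIμ : ENNReal.ofReal t * μ S ≤ ∫⁻ x, g x ∂μ := by
    calc ENNReal.ofReal t * μ S = ∫⁻ _ in S, ENNReal.ofReal t ∂μ :=
          (setLIntegral_const _ _).symm
      _ ≤ ∫⁻ x in S, g x ∂μ := setLIntegral_mono hgm hgS
      _ ≤ ∫⁻ x, g x ∂μ := setLIntegral_le_lintegral _ _
  -- slabs covering Q \ S
  have hslab : ∀ (b : Fin d → ℝ) (i : Fin d) (u v : ℝ), u ≤ v → (v - u ≤ t) →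
      μ {x : EuclideanSpace ℝ (Fin d) |
          ∀ j, x j ∈ (if j = i then Icc u v else Icc (a j) (a j + ε))}
        ≤ ENNReal.ofReal (m / (8 * d)) := by
    intro b i u v huv hvu
    have hmeas : ∀ j : Fin d,
        MeasurableSet (if j = i then Icc u v else Icc (a j) (a j + ε)) := by
      intro j; split <;> exact measurableSet_Icc
    have hvol : volume {x : EuclideanSpace ℝ (Fin d) |
        ∀ j, x j ∈ (if j = i then Icc u v else Icc (a j) (a j + ε))}
        = ENNReal.ofReal (v - u) * ENNReal.ofReal ε ^ (d - 1) := by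
      rw [box_volume _ hmeas]
      rw [Finset.prod_eq_mul_prod_sdiff_singleton_of_mem (Finset.mem_univ i)]
      have h1 : volume (if i = i then Icc u v else Icc (a i) (a i + ε))
          = ENNReal.ofReal (v - u) := by simp [Real.volume_Icc]
      have h2 : ∏ j ∈ Finset.univ \ {i},
          volume (if j = i then Icc u v else Icc (a j) (a j + ε))
          = ENNReal.ofReal ε ^ (d - 1) := by
        have hcg : ∀ j ∈ Finset.univ \ {i},
            volume (if j = i then Icc u v else Icc (a j) (a j + ε)) = ENNReal.ofReal ε := by
          intro j hj
          rw [Finset.mem_sdiff, Finset.mem_singleton] at hj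
          rw [if_neg hj.2, Real.volume_Icc, add_sub_cancel_left]
        rw [Finset.prod_congr rfl hcg, Finset.prod_const,
          Finset.card_sdiff_of_subset (Finset.subset_univ _), Finset.card_singleton,
          Finset.card_univ, Fintype.card_fin]
      rw [h1, h2]
    calc μ _ ≤ ENNReal.ofReal L * volume _ := hdens _ (box_measurable _ hmeas)
      _ = ENNReal.ofReal L * (ENNReal.ofReal (v - u) * ENNReal.ofReal ε ^ (d - 1)) := by
          rw [hvol]
      _ ≤ ENNReal.ofReal L * (ENNReal.ofReal t * ENNReal.ofReal ε ^ (d - 1)) :=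
          mul_le_mul_right (mul_le_mul_left (ENNReal.ofReal_le_ofReal hvu) _) _
      _ = ENNReal.ofReal (L * (t * E)) := by
          rw [← ENNReal.ofReal_pow hε.le, ← ENNReal.ofReal_mul htpos.le,
            ← ENNReal.ofReal_mul hL.le]
      _ = ENNReal.ofReal (m / (8 * d)) := by
          congr 1
          rw [htdef]
          field_simp
  -- μ (Q \ S) ≤ m/4
  have hQS : μ (Q \ S) ≤ ENNReal.ofReal (m / 4) := by
    have hcover : Q \ S ⊆ ⋃ i : Fin d,
        ({x : EuclideanSpace ℝ (Fin d) |
            ∀ j, x j ∈ (if j = i then Icc (a i) (a i + t) else Icc (a j) (a j + ε))} ∪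
         {x : EuclideanSpace ℝ (Fin d) |
            ∀ j, x j ∈ (if j = i then Icc (a i + ε - t) (a i + ε) else Icc (a j) (a j + ε))}) := by
      intro x hx
      obtain ⟨hxQ, hxS⟩ := hx
      rw [hSdef, Set.mem_setOf_eq] at hxS
      push_neg at hxS
      obtain ⟨i, hi⟩ := hxS
      rw [Set.mem_Icc, not_and_or, not_le, not_le] at hi
      refine Set.mem_iUnion.mpr ⟨i, ?_⟩
      have hxQ' : ∀ j, x j ∈ Icc (a j) (a j + ε) := hxQ
      rcases hi with hlt | hgt
      · left
        intro j
        by_cases hj : j = i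
        · subst hj
          rw [if_pos rfl, Set.mem_Icc]
          exact ⟨(hxQ' j).1, hlt.le⟩
        · rw [if_neg hj]; exact hxQ' j
      · right
        intro j
        by_cases hj : j = i
        · subst hj
          rw [if_pos rfl, Set.mem_Icc]
          exact ⟨by linarith [(hxQ' j).2, hgt], (hxQ' j).2⟩
        · rw [if_neg hj]; exact hxQ' j
    calc μ (Q \ S) ≤ ∑' i : Fin d, μ _ := (measure_mono hcover).trans (measure_iUnion_le _)
      _ ≤ ∑' _ : Fin d, (ENNReal.ofReal (m / (8 * d)) + ENNReal.ofReal (m / (8 * d))) := by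
          refine ENNReal.tsum_le_tsum fun i => ?_
          refine (measure_union_le _ _).trans ?_
          gcongr
          · exact hslab a i (a i) (a i + t) (by linarith) (by linarith)
          · exact hslab a i (a i + ε - t) (a i + ε) (by linarith) (by linarith)
      _ = (d : ℝ≥0∞) * (ENNReal.ofReal (m / (8 * d)) + ENNReal.ofReal (m / (8 * d))) := by
          rw [tsum_fintype, Finset.sum_const, Finset.card_univ, Fintype.card_fin,
            nsmul_eq_mul]
      _ = ENNReal.ofReal (m / 4) := by
          rw [← ENNReal.ofReal_add (by positivity) (by positivity),
            ← ENNReal.ofReal_natCast d,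
            ← ENNReal.ofReal_mul (Nat.cast_nonneg d)]
          congr 1
          field_simp
          ring
  -- μ S ≥ 3m/4
  have hμS : ENNReal.ofReal (3 * m / 4) ≤ μ S := by
    have h1 : μ Q ≤ μ (Q ∩ S) + μ (Q \ S) := measure_le_inter_add_diff μ Q S
    have h2 : ENNReal.ofReal m ≤ μ S + ENNReal.ofReal (m / 4) := by
      rw [← hμQ]
      exact h1.trans (add_le_add (measure_mono Set.inter_subset_right) hQS)
    have h3 : ENNReal.ofReal m - ENNReal.ofReal (m / 4) ≤ μ S :=
      tsub_le_iff_right.mpr h2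
    calc ENNReal.ofReal (3 * m / 4) = ENNReal.ofReal (m - m / 4) := by congr 1; ring
      _ = ENNReal.ofReal m - ENNReal.ofReal (m / 4) :=
          ENNReal.ofReal_sub _ (by positivity)
      _ ≤ μ S := h3
  -- the key duality bound
  refine le_iInf₂ fun γ hγ => ?_
  obtain ⟨h1, h2⟩ := hγ
  have hdual : ∫⁻ x, g x ∂μ ≤ ∫⁻ x, g x ∂ν + ∫⁻ z, edist z.1 z.2 ∂γ := by
    have e1 : ∫⁻ x, g x ∂μ = ∫⁻ z, g z.1 ∂γ := by
      rw [← h1, lintegral_map hgm measurable_fst]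
    have e2 : ∫⁻ x, g x ∂ν = ∫⁻ z, g z.2 ∂γ := by
      rw [← h2, lintegral_map hgm measurable_snd]
    rw [e1, e2]
    calc ∫⁻ z, g z.1 ∂γ ≤ ∫⁻ z, g z.2 + edist z.1 z.2 ∂γ :=
          lintegral_mono fun z => hglip z.1 z.2
      _ = ∫⁻ z, g z.2 ∂γ + ∫⁻ z, edist z.1 z.2 ∂γ :=
          lintegral_add_left (hgm.comp measurable_snd) _
  have hmain : ENNReal.ofReal (1 / (16 * d) * m ^ 2 / (L * ε ^ (d - 1))) + ∫⁻ x, g x ∂ν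
      ≤ ∫⁻ x, g x ∂μ := by
    refine le_trans ?_ (le_trans (mul_le_mul_right hμS _) hIμ)
    refine le_trans (add_le_add le_rfl hIν) ?_
    rw [← ENNReal.ofReal_mul htpos.le, ← ENNReal.ofReal_mul htpos.le,
      ← ENNReal.ofReal_add (by positivity) (by positivity)]
    apply ENNReal.ofReal_le_ofReal
    have hc : 1 / (16 * d) * m ^ 2 / (L * E) = t * (m / 2) := by
      rw [htdef]; field_simp; ring
    rw [hEdef] at hc
    rw [hc]
    nlinarith [htpos, hm]
  calc ENNReal.ofReal (1 / (16 * d) * m ^ 2 / (L * ε ^ (d - 1)))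
      ≤ ∫⁻ x, g x ∂μ - ∫⁻ x, g x ∂ν := ENNReal.le_sub_of_add_le_right hIνfin hmain
    _ ≤ ∫⁻ z, edist z.1 z.2 ∂γ := by
        rw [tsub_le_iff_left]
        exact hdual
end
end

section
/- Fix d ≥ 1 and 1 ≤ p < ∞. There exists a constant c_{d,p} > 0 such that the following holds. Let Q ⊂ ℝ^d be an axis-parallel cube of side length ε > 0, and let μ be a finite Borel measure on Q with μ(A) ≤ L · Leb(A) for all Borel sets A, where L > 0, and with total mass μ(Q) = m. Then ∫_Q dist(x, ∂Q)^p dμ(x) ≥ c_{d,p} · m · (m / (L · ε^{d-1}))^p. -/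
open MeasureTheory Set ENNReal

noncomputable section

lemma cube_vol (d : ℕ) (a b : Fin d → ℝ) :
    volume {x : EuclideanSpace ℝ (Fin d) | ∀ i, x i ∈ Icc (a i) (b i)}
      = ∏ i, ENNReal.ofReal (b i - a i) := by
  have h : {x : EuclideanSpace ℝ (Fin d) | ∀ i, x i ∈ Icc (a i) (b i)}
      = (MeasurableEquiv.toLp 2 (Fin d → ℝ)).symm ⁻¹' (Icc a b) := by
    ext x
    simp only [mem_setOf_eq, mem_preimage, mem_Icc, Pi.le_def, forall_and, Set.mem_Icc]
    exact Iff.rfl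
  rw [h, (EuclideanSpace.volume_preserving_symm_measurableEquiv_toLp (Fin d)).measure_preimage
    measurableSet_Icc.nullMeasurableSet]
  exact Real.volume_Icc_pi

lemma coord_le_dist (d : ℕ) (x y : EuclideanSpace ℝ (Fin d)) (i : Fin d) :
    |x i - y i| ≤ dist x y := by
  rw [EuclideanSpace.dist_eq]
  rw [show |x i - y i| = Real.sqrt ((x i - y i)^2) by rw [Real.sqrt_sq_eq_abs]]
  apply Real.sqrt_le_sqrt
  calc (x i - y i)^2 = dist (x i) (y i) ^ 2 := by rw [Real.dist_eq, sq_abs]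
  _ ≤ ∑ j, dist (x j) (y j) ^ 2 :=
    Finset.single_le_sum (f := fun j => dist (x j) (y j)^2) (fun j _ => sq_nonneg _)
      (Finset.mem_univ i)

lemma cube_closed (d : ℕ) (a b : Fin d → ℝ) :
    IsClosed {x : EuclideanSpace ℝ (Fin d) | ∀ i, x i ∈ Icc (a i) (b i)} := by
  have : {x : EuclideanSpace ℝ (Fin d) | ∀ i, x i ∈ Icc (a i) (b i)}
      = ⋂ i, (fun x : EuclideanSpace ℝ (Fin d) => x i) ⁻¹' Icc (a i) (b i) := by
    ext x; simp
  rw [this]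
  exact isClosed_iInter fun i => isClosed_Icc.preimage (PiLp.continuous_apply 2 _ i)

lemma open_cube_open (d : ℕ) (a b : Fin d → ℝ) :
    IsOpen {x : EuclideanSpace ℝ (Fin d) | ∀ i, x i ∈ Ioo (a i) (b i)} := by
  have : {x : EuclideanSpace ℝ (Fin d) | ∀ i, x i ∈ Ioo (a i) (b i)}
      = ⋂ i, (fun x : EuclideanSpace ℝ (Fin d) => x i) ⁻¹' Ioo (a i) (b i) := by
    ext x; simp
  rw [this]
  exact isOpen_iInter_of_finite fun i => isOpen_Ioo.preimage (PiLp.continuous_apply 2 _ i)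

lemma pow_sub_pow_le_aux (n : ℕ) {a b : ℝ} (hb : 0 ≤ b) (hba : b ≤ a) :
    a^(n+1) - b^(n+1) ≤ (n+1) * (a - b) * a^n := by
  induction n with
  | zero => simp
  | succ n ih =>
      have ha : 0 ≤ a := hb.trans hba
      have h2 : b^(n+1) ≤ a^(n+1) := pow_le_pow_left₀ hb hba _
      have h3 := mul_le_mul_of_nonneg_left ih ha
      calc a^(n+1+1) - b^(n+1+1)
          = a * (a^(n+1) - b^(n+1)) + (a - b) * b^(n+1) := by ring
        _ ≤ a * ((↑n + 1) * (a - b) * a ^ n) + (a - b) * a^(n+1) :=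
            add_le_add h3 (mul_le_mul_of_nonneg_left h2 (by linarith))
        _ = (↑(n+1) + 1) * (a - b) * a ^ (n+1) := by push_cast; ring

-- infDist lower bound on inner cube
lemma infDist_lower (d : ℕ) (hd : 1 ≤ d) (a : Fin d → ℝ) (ε : ℝ) (hε : 0 < ε)
    (t : ℝ) (ht : 0 ≤ t) (x : EuclideanSpace ℝ (Fin d))
    (hx : ∀ i, x i ∈ Icc (a i + t) (a i + ε - t)) :
    t ≤ Metric.infDist x
      (frontier {y : EuclideanSpace ℝ (Fin d) | ∀ i, y i ∈ Icc (a i) (a i + ε)}) := by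
  set Q := {y : EuclideanSpace ℝ (Fin d) | ∀ i, y i ∈ Icc (a i) (a i + ε)} with hQ
  have hQc : IsClosed Q := cube_closed d a (fun i => a i + ε)
  have hfr : frontier Q = Q \ interior Q := hQc.frontier_eq
  have hio : {y : EuclideanSpace ℝ (Fin d) | ∀ i, y i ∈ Ioo (a i) (a i + ε)} ⊆ interior Q :=
    interior_maximal (fun y hy i => ⟨(hy i).1.le, (hy i).2.le⟩)
      (open_cube_open d a (fun i => a i + ε))
  -- the corner `a` is in the frontier
  have i0 : Fin d := ⟨0, hd⟩
  set pt : EuclideanSpace ℝ (Fin d) := WithLp.toLp 2 (fun i => a i) with hpt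
  have haQ : pt ∈ Q := fun i => ⟨le_refl _, by simp [hpt]; linarith⟩
  have haint : pt ∉ interior Q := by
    intro hint
    rcases Metric.isOpen_iff.1 isOpen_interior _ hint with ⟨δ, hδ, hball⟩
    set y : EuclideanSpace ℝ (Fin d) := pt - (δ/2) • EuclideanSpace.single i0 1 with hy
    have hdist : dist y pt = δ/2 := by
      rw [dist_eq_norm]
      have h5 : y - pt = -((δ/2) • EuclideanSpace.single i0 (1:ℝ)) := by rw [hy]; abel
      rw [h5, norm_neg, norm_smul, EuclideanSpace.norm_single]
      simp [abs_of_pos hδ]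
    have hyQ : y ∈ Q := interior_subset (hball (by rw [Metric.mem_ball, hdist]; linarith))
    have h6 := (hyQ i0).1
    have hyi : y i0 = a i0 - δ/2 := by
      rw [hy]
      simp [EuclideanSpace.single_apply, hpt]
    rw [hyi] at h6
    linarith
  have hne : (frontier Q).Nonempty := ⟨_, by rw [hfr]; exact ⟨haQ, haint⟩⟩
  haveI := hne.to_subtype
  rw [Metric.infDist_eq_iInf]
  apply le_ciInf
  rintro ⟨y, hyfr⟩
  simp only []
  rw [hfr] at hyfr
  obtain ⟨hyQ, hyint⟩ := hyfr
  have hex : ∃ i, y i ∉ Ioo (a i) (a i + ε) := by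
    by_contra h
    push_neg at h
    exact hyint (hio h)
  obtain ⟨i, hi⟩ := hex
  have h1 := (hyQ i).1
  have h2 := (hyQ i).2
  have hcd := coord_le_dist d x y i
  have hcases : y i ≤ a i ∨ a i + ε ≤ y i := by
    by_contra h
    push_neg at h
    exact hi ⟨h.1, h.2⟩
  rcases hcases with h | h
  · have h7 : t ≤ x i - y i := by have := (hx i).1; linarith
    calc t ≤ |x i - y i| := le_trans h7 (le_abs_self _)
    _ ≤ dist x y := hcd
  · have h7 : t ≤ y i - x i := by have := (hx i).2; linarith
    calc t ≤ |x i - y i| := by rw [abs_sub_comm]; exact le_trans h7 (le_abs_self _)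
    _ ≤ dist x y := hcd

theorem boundary_distance_integral_lower_bound_p (d : ℕ) (hd : 1 ≤ d) (p : ℝ) (hp : 1 ≤ p) :
    ∃ c : ℝ, 0 < c ∧
      ∀ (ε : ℝ) (a : Fin d → ℝ), 0 < ε →
      ∀ μ : Measure (EuclideanSpace ℝ (Fin d)),
        μ {x : EuclideanSpace ℝ (Fin d) | ∀ i, x i ∈ Icc (a i) (a i + ε)}ᶜ = 0 →
        ∀ L : ℝ, 0 < L →
        (∀ A : Set (EuclideanSpace ℝ (Fin d)), MeasurableSet A →
          μ A ≤ ENNReal.ofReal L * volume A) →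
        ∀ m : ℝ, 0 ≤ m →
        μ {x : EuclideanSpace ℝ (Fin d) | ∀ i, x i ∈ Icc (a i) (a i + ε)}
          = ENNReal.ofReal m →
        ENNReal.ofReal (c * m * (m / (L * ε ^ (d - 1))) ^ p)
          ≤ ∫⁻ x in {x : EuclideanSpace ℝ (Fin d) | ∀ i, x i ∈ Icc (a i) (a i + ε)},
              ENNReal.ofReal
                ((Metric.infDist x
                  (frontier {x : EuclideanSpace ℝ (Fin d) | ∀ i, x i ∈ Icc (a i) (a i + ε)}))
                  ^ p)
              ∂μ := by
  have hd0 : (0:ℝ) < d := by exact_mod_cast Nat.lt_of_lt_of_le Nat.zero_lt_one hd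
  refine ⟨(1/2) * (1/(4*(d:ℝ)))^p, by positivity, ?_⟩
  intro ε a hε μ hcomp L hL hAC m hm hQm
  set Q := {x : EuclideanSpace ℝ (Fin d) | ∀ i, x i ∈ Icc (a i) (a i + ε)} with hQdef
  rcases eq_or_lt_of_le hm with hm0 | hm0
  · rw [← hm0]
    simp [Real.zero_rpow (by linarith : p ≠ 0)]
  set B : ℝ := L * ε ^ (d - 1) with hBdef
  have hB : 0 < B := by positivity
  set t : ℝ := m / (4 * d * B) with htdef
  have ht0 : 0 < t := by positivity
  -- measurability of Q
  have hQmeas : MeasurableSet Q := (cube_closed d a (fun i => a i + ε)).measurableSet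
  have hvolQ : volume Q = ENNReal.ofReal (ε ^ d) := by
    rw [hQdef, cube_vol d a (fun i => a i + ε)]
    simp only [add_sub_cancel_left]
    rw [Finset.prod_const, Finset.card_univ, Fintype.card_fin, ← ENNReal.ofReal_pow hε.le]
  -- m ≤ L * ε ^ d
  have hmL : m ≤ L * ε ^ d := by
    have h1 := hAC Q hQmeas
    rw [hQm, hvolQ, ← ENNReal.ofReal_mul hL.le] at h1
    exact (ENNReal.ofReal_le_ofReal_iff (by positivity)).1 h1
  have hεd : ε ^ d = ε ^ (d - 1) * ε := by
    rw [← pow_succ, Nat.sub_add_cancel hd]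
  have hmB : m ≤ B * ε := by rw [hBdef]; nlinarith [hεd]
  have htε : t ≤ ε / (4 * d) := by
    rw [htdef, div_le_div_iff₀ (by positivity) (by positivity)]
    nlinarith
  have hd1 : (1:ℝ) ≤ d := by exact_mod_cast hd
  have ht2 : 2 * t ≤ ε / 2 := by
    have : ε / (4 * d) ≤ ε / 4 := by
      apply div_le_div_of_nonneg_left hε.le (by norm_num) (by linarith)
    linarith
  -- the inner cube
  set I := {x : EuclideanSpace ℝ (Fin d) | ∀ i, x i ∈ Icc (a i + t) (a i + ε - t)} with hIdef
  have hImeas : MeasurableSet I :=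
    (cube_closed d (fun i => a i + t) (fun i => a i + ε - t)).measurableSet
  have hIQ : I ⊆ Q := fun x hx i => ⟨by linarith [(hx i).1], by linarith [(hx i).2]⟩
  have hvolI : volume I = ENNReal.ofReal ((ε - 2*t) ^ d) := by
    rw [hIdef, cube_vol d (fun i => a i + t) (fun i => a i + ε - t)]
    have he : ∀ i : Fin d, (a i + ε - t) - (a i + t) = ε - 2*t := fun i => by ring
    simp only [he]
    rw [Finset.prod_const, Finset.card_univ, Fintype.card_fin,
      ← ENNReal.ofReal_pow (by linarith)]
  -- volume of the shell
  have hshell : volume (Q \ I) ≤ ENNReal.ofReal (2 * d * t * ε ^ (d - 1)) := by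
    rw [measure_diff hIQ hImeas.nullMeasurableSet (by rw [hvolI]; exact ofReal_ne_top),
      hvolQ, hvolI, ← ENNReal.ofReal_sub _ (pow_nonneg (by linarith) d)]
    apply ENNReal.ofReal_le_ofReal
    obtain ⟨k, hk⟩ : ∃ k, d = k + 1 := ⟨d - 1, (Nat.sub_add_cancel hd).symm⟩
    have hkk : d - 1 = k := by omega
    have haux := pow_sub_pow_le_aux k (a := ε) (b := ε - 2*t) (by linarith) (by linarith)
    calc ε ^ d - (ε - 2*t) ^ d = ε ^ (k+1) - (ε - 2*t) ^ (k+1) := by rw [hk]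
    _ ≤ ((k:ℝ)+1) * (ε - (ε - 2*t)) * ε ^ k := haux
    _ = 2 * ((k:ℝ)+1) * t * ε ^ k := by ring
    _ = 2 * d * t * ε ^ (d-1) := by rw [hkk, hk]; push_cast; ring
  -- μ of shell ≤ m/2
  have hμshell : μ (Q \ I) ≤ ENNReal.ofReal (m / 2) := by
    have h1 := hAC (Q \ I) (hQmeas.diff hImeas)
    have h2 : ENNReal.ofReal L * volume (Q \ I) ≤ ENNReal.ofReal (m/2) := by
      calc ENNReal.ofReal L * volume (Q \ I)
          ≤ ENNReal.ofReal L * ENNReal.ofReal (2 * d * t * ε ^ (d - 1)) :=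
            mul_le_mul_right hshell _
        _ = ENNReal.ofReal (L * (2 * d * t * ε ^ (d-1))) := (ENNReal.ofReal_mul hL.le).symm
        _ = ENNReal.ofReal (m/2) := by
            congr 1
            rw [htdef, hBdef]
            field_simp
            ring
    exact h1.trans h2
  -- μ I ≥ m/2
  have hμI : ENNReal.ofReal (m / 2) ≤ μ I := by
    have hcover : Q ⊆ (Q \ I) ∪ I := fun x hx => by
      by_cases h : x ∈ I
      · exact Or.inr h
      · exact Or.inl ⟨hx, h⟩
    have h1 : μ Q ≤ μ (Q \ I) + μ I :=
      (measure_mono hcover).trans (measure_union_le _ _)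
    rw [hQm] at h1
    have h2 : ENNReal.ofReal m ≤ ENNReal.ofReal (m/2) + μ I :=
      h1.trans (add_le_add_left hμshell _)
    have h3 : ENNReal.ofReal m = ENNReal.ofReal (m/2) + ENNReal.ofReal (m/2) := by
      rw [← ENNReal.ofReal_add (by linarith) (by linarith)]
      congr 1; ring
    rw [h3] at h2
    exact (ENNReal.add_le_add_iff_left ofReal_ne_top).1 h2
  -- pointwise bound on I
  have hpw : ∀ x ∈ I, ENNReal.ofReal (t ^ p)
      ≤ ENNReal.ofReal ((Metric.infDist x (frontier Q)) ^ p) := by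
    intro x hx
    apply ENNReal.ofReal_le_ofReal
    exact Real.rpow_le_rpow ht0.le (infDist_lower d hd a ε hε t ht0.le x hx) (by linarith)
  -- chain of inequalities
  calc ENNReal.ofReal ((1/2) * (1/(4*(d:ℝ)))^p * m * (m / B) ^ p)
      = ENNReal.ofReal (t ^ p * (m / 2)) := by
        congr 1
        rw [htdef, hBdef]
        rw [show m / (4 * ↑d * (L * ε ^ (d-1))) = (1/(4*(d:ℝ))) * (m / (L * ε ^ (d-1))) by ring]
        rw [Real.mul_rpow (by positivity) (by positivity)]
        ring
    _ = ENNReal.ofReal (t ^ p) * ENNReal.ofReal (m / 2) :=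
        ENNReal.ofReal_mul (by positivity)
    _ ≤ ENNReal.ofReal (t ^ p) * μ I := mul_le_mul_right hμI _
    _ = ∫⁻ _ in I, ENNReal.ofReal (t ^ p) ∂μ := (setLIntegral_const _ _).symm
    _ ≤ ∫⁻ x in I, ENNReal.ofReal ((Metric.infDist x (frontier Q)) ^ p) ∂μ :=
        setLIntegral_mono' hImeas hpw
    _ ≤ ∫⁻ x in Q, ENNReal.ofReal ((Metric.infDist x (frontier Q)) ^ p) ∂μ :=
        lintegral_mono_set hIQ
end
end
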